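/- arXiv:1312.0240 — 3 statements merged into one kernel-verified Lean document; each statement's English description precedes it below -/
import Mathlib

section
/- Let K be a field of characteristic p > 0, L/K a finite purely inseparable field extension, and x_1, …, x_n a Pickert generating sequence for L/K with exponent sequence e_1 ≥ ⋯ ≥ e_n. Then the monomials x_1^{r_1} x_2^{r_2} ⋯ x_n^{r_n} with 0 ≤ r_i < p^{e_i} form a basis of L as a K-vector space; in particular [L : K] = p^{e_1 + ⋯ + e_n}. -/
variable {K L : Type*} [Field K] [Field L] [Algebra K L]

/-- `exp[x : F]`: the least `m` with `x ^ p ^ m ∈ F`. -/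
noncomputable def pExp (p : ℕ) (F : IntermediateField K L) (x : L) : ℕ :=
  sInf {m | x ^ p ^ m ∈ F}

/-- The exponent of `F` over `E`: the least `m` with `F ^ (p ^ m) ⊆ E`. -/
noncomputable def pExtExp (p : ℕ) (E F : IntermediateField K L) : ℕ :=
  sInf {m | ∀ y ∈ F, y ^ p ^ m ∈ E}

/-- `K(x₀, …, x_{i-1})`, the field generated over `K` by the first `i` terms of `x`. -/
def firstAdjoin (K : Type*) {L : Type*} [Field K] [Field L] [Algebra K L]
    {n : ℕ} (x : Fin n → L) (i : ℕ) : IntermediateField K L :=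
  IntermediateField.adjoin K (x '' {j | (j : ℕ) < i})

/-- `x₀, …, x_{n-1}` is a p-basis of `L/K`: `L = K(Lᵖ)(x₀, …, x_{n-1})` and
`[L : K(Lᵖ)] = pⁿ`. -/
def IsPBasis (p : ℕ) (K : Type*) {L : Type*} [Field K] [Field L] [Algebra K L]
    {n : ℕ} (x : Fin n → L) : Prop :=
  IntermediateField.adjoin K ((Set.range fun y : L => y ^ p) ∪ Set.range x) = ⊤ ∧
  Module.finrank ↥(IntermediateField.adjoin K (Set.range fun y : L => y ^ p)) L = p ^ n

/-- A Pickert generating sequence: a p-basis ordered so that for each `i`,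
`exp[K(x₀…xᵢ) : K(x₀…x_{i-1})] = exp[xᵢ : K(x₀…x_{i-1})]`. -/
def IsPickertSeq (p : ℕ) (K : Type*) {L : Type*} [Field K] [Field L] [Algebra K L]
    {n : ℕ} (x : Fin n → L) : Prop :=
  IsPBasis p K x ∧
  ∀ i : Fin n,
    pExtExp p (firstAdjoin K x i) (firstAdjoin K x ((i : ℕ) + 1)) =
      pExp p (firstAdjoin K x i) (x i)

/-- The exponent sequence `eᵢ := exp[xᵢ : K(x₀,…,x_{i-1})]` of a sequence `x`. -/
noncomputable def pickertExp (p : ℕ) (K : Type*) {L : Type*} [Field K] [Field L]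
    [Algebra K L] {n : ℕ} (x : Fin n → L) (i : Fin n) : ℕ :=
  pExp p (firstAdjoin K x i) (x i)

/-! Each `xᵢ` is purely inseparable over `Fᵢ = K(x₀, …, x_{i-1})`, so its minimal
polynomial there is `X ^ p ^ eᵢ - a` and `1, xᵢ, …, xᵢ ^ (p ^ eᵢ - 1)` is an `Fᵢ`-basis
of `F_{i+1}`. Multiplying these bases along the tower `K = F₀ ⊆ ⋯ ⊆ Fₙ` gives the monomial
basis of `Fₙ`. Finally `Fₙ = L`: from `L = K(Lᵖ, x)` the Frobenius gives
`L = K(L ^ p ^ k, x)` for every `k`, and `L ^ p ^ k ⊆ K` once `k` is the exponent of `L/K`. -/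

open IntermediateField

theorem pExp_eq_elemExponent (p : ℕ) (F : IntermediateField K L) [ExpChar F p]
    [IsPurelyInseparable F L] (a : L) :
    pExp p F a = IsPurelyInseparable.elemExponent F a := by
  have hrange (m : ℕ) : a ^ p ^ m ∈ (algebraMap F L).range ↔ a ^ p ^ m ∈ F := by simp
  have hdef := (hrange _).mp (IsPurelyInseparable.elemExponent_def' F p a)
  exact le_antisymm (Nat.sInf_le hdef) (le_csInf ⟨_, hdef⟩ fun m hm =>
    IsPurelyInseparable.elemExponent_le_of_pow_mem' p ((hrange m).mpr hm))

theorem natDegree_minpoly_eq_pow_pExp (p : ℕ) [ExpChar K p] [IsPurelyInseparable K L]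
    (F : IntermediateField K L) (a : L) : (minpoly F a).natDegree = p ^ pExp p F a := by
  have := IsPurelyInseparable.tower_top K F L
  rw [pExp_eq_elemExponent, IsPurelyInseparable.minpoly_natDegree_eq' F p a]

theorem adjoin_simple_subset_span_pow {F : Type*} [Field F] [Algebra F L] {a : L}
    (ha : IsIntegral F a) :
    (F⟮a⟯ : Set L) ⊆
      Submodule.span F (Set.range fun j : Fin (minpoly F a).natDegree => a ^ (j : ℕ)) := by
  intro y hy
  rw [SetLike.mem_coe, ← mem_toSubalgebra,
    adjoin_simple_toSubalgebra_of_isAlgebraic ha.isAlgebraic,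
    Algebra.adjoin_singleton_eq_range_aeval] at hy
  obtain ⟨f, rfl⟩ := hy
  exact ha.mem_span_pow ⟨f, rfl⟩

theorem pow_mem_of_mem_adjoin (p k : ℕ) [ExpChar L p] {S : Set L} {W : IntermediateField K L}
    (hS : ∀ s ∈ S, s ^ p ^ k ∈ W) {z : L} (hz : z ∈ adjoin K S) : z ^ p ^ k ∈ W := by
  have hle : (adjoin K S).toSubfield ≤ W.toSubfield.comap (iterateFrobenius L p k) := by
    rw [adjoin_toSubfield, Subfield.closure_le]
    rintro _ (⟨c, rfl⟩ | hs)
    · rw [SetLike.mem_coe, Subfield.mem_comap, iterateFrobenius_def, ← map_pow]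
      exact W.algebraMap_mem _
    · exact hS _ hs
  simpa [iterateFrobenius_def] using hle hz

theorem adjoin_eq_top_of_adjoin_pow_union_eq_top (p : ℕ) [ExpChar L p] {S : Set L}
    (htop : adjoin K ((Set.range fun y : L => y ^ p) ∪ S) = ⊤) {m : ℕ}
    (hm : ∀ y : L, y ^ p ^ m ∈ (algebraMap K L).range) : adjoin K S = ⊤ := by
  have key : ∀ k, adjoin K (S ∪ Set.range fun y : L => y ^ p ^ k) = ⊤ := by
    intro k
    induction k with
    | zero => exact eq_top_iff.mpr fun y _ => subset_adjoin _ _ (Or.inr ⟨y, by simp⟩)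
    | succ k ih =>
      rw [eq_top_iff, ← ih, adjoin_le_iff]
      rintro _ (hs | ⟨z, rfl⟩)
      · exact subset_adjoin _ _ (Or.inl hs)
      · have hz : z ∈ adjoin K ((Set.range fun y : L => y ^ p) ∪ S) := htop ▸ mem_top
        refine SetLike.mem_coe.mpr (pow_mem_of_mem_adjoin p k ?_ hz)
        rintro _ (⟨y, rfl⟩ | hs)
        · exact subset_adjoin _ _ (Or.inr ⟨y, by rw [← pow_mul, ← pow_succ']⟩)
        · exact pow_mem (subset_adjoin K _ (Set.mem_union_left _ hs)) _
  rw [← key m]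
  refine le_antisymm (adjoin.mono _ _ _ Set.subset_union_left) (adjoin_le_iff.mpr ?_)
  rintro _ (hs | ⟨y, rfl⟩)
  · exact subset_adjoin _ _ hs
  · obtain ⟨c, hc⟩ := hm y
    show y ^ p ^ m ∈ adjoin K S
    rw [← hc]
    exact IntermediateField.algebraMap_mem _ c

theorem prod_pow_snoc {n : ℕ} (x : Fin (n + 1) → L) {d : Fin (n + 1) → ℕ}
    (r : ∀ i : Fin n, Fin (d i.castSucc)) (c : Fin (d (Fin.last n))) :
    ∏ i, x i ^ ((Fin.snoc (α := fun i => Fin (d i)) r c i : Fin (d i)) : ℕ) =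
      (∏ i : Fin n, x i.castSucc ^ (r i : ℕ)) * x (Fin.last n) ^ (c : ℕ) := by
  simp [Fin.prod_univ_castSucc]

theorem linearIndependent_prod_pow_of_chain {F : ℕ → IntermediateField K L}
    (hmono : Monotone F) :
    ∀ {n : ℕ} (x : Fin n → L) (d : Fin n → ℕ), (∀ i : Fin n, x i ∈ F (i + 1)) →
      (∀ i : Fin n, LinearIndependent (F i) fun j : Fin (d i) => x i ^ (j : ℕ)) →
      LinearIndependent K fun r : (∀ i, Fin (d i)) => ∏ i, x i ^ (r i : ℕ)
  | 0, x, d, _, _ => by simp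
  | n + 1, x, d, hmem, hind => by
    have hprod_mem (r : ∀ i : Fin n, Fin (d i.castSucc)) :
        ∏ i : Fin n, x i.castSucc ^ (r i : ℕ) ∈ F n :=
      prod_mem fun i _ => pow_mem (hmono (Nat.succ_le_of_lt i.isLt) (hmem i.castSucc)) _
    have hinit : LinearIndependent K fun r => (⟨_, hprod_mem r⟩ : F n) :=
      .of_comp (F n).val.toLinearMap <| linearIndependent_prod_pow_of_chain hmono
        (fun i => x i.castSucc) _ (fun i => hmem i.castSucc) fun i => hind i.castSucc
    refine (linearIndependent_equiv' ((Equiv.prodComm _ _).trans (Fin.snocEquiv _)) ?_).mp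
      (linearIndependent_smul hinit (hind (Fin.last n)))
    ext ⟨r, c⟩
    simp [prod_pow_snoc, Algebra.smul_def]

theorem subset_span_prod_pow_of_chain {F : ℕ → IntermediateField K L} (hbot : F 0 = ⊥) :
    ∀ {n : ℕ} (x : Fin n → L) (d : Fin n → ℕ),
      (∀ i : Fin n, (F (i + 1) : Set L) ⊆
        Submodule.span (F i) (Set.range fun j : Fin (d i) => x i ^ (j : ℕ))) →
      (F n : Set L) ⊆
        Submodule.span K (Set.range fun r : (∀ i, Fin (d i)) => ∏ i, x i ^ (r i : ℕ))
  | 0, x, d, _ => by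
    rintro _ hy
    rw [hbot, coe_bot] at hy
    obtain ⟨c, rfl⟩ := hy
    rw [SetLike.mem_coe, Algebra.algebraMap_eq_smul_one]
    exact Submodule.smul_mem _ c (Submodule.subset_span ⟨isEmptyElim, by simp⟩)
  | n + 1, x, d, hspan => by
    intro y hy
    obtain ⟨c, rfl⟩ := (Submodule.mem_span_range_iff_exists_fun _).mp (hspan (Fin.last n) hy)
    refine Submodule.sum_mem _ fun j _ => ?_
    have hc : (c j : L) ∈ Submodule.span K
        (Set.range fun r : (∀ i : Fin n, Fin (d i.castSucc)) =>
          ∏ i, x i.castSucc ^ (r i : ℕ)) :=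
      subset_span_prod_pow_of_chain hbot (fun i => x i.castSucc) _ (fun i => hspan i.castSucc)
        (c j).2
    have hmul := Submodule.mul_mem_mul hc (Submodule.subset_span
      (Set.mem_range_self (f := fun j : Fin (d (Fin.last n)) => x (Fin.last n) ^ (j : ℕ)) j))
    rw [Submodule.span_mul_span] at hmul
    rw [Algebra.smul_def]
    refine Submodule.span_mono ?_ hmul
    rintro _ ⟨_, ⟨r, rfl⟩, _, ⟨k, rfl⟩, rfl⟩
    exact ⟨Fin.snoc r k, prod_pow_snoc x r k⟩

section firstAdjoin

variable {n : ℕ} (x : Fin n → L)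

theorem firstAdjoin_zero : firstAdjoin K x 0 = ⊥ := by
  simp [firstAdjoin]

theorem firstAdjoin_mono : Monotone (firstAdjoin K x) :=
  fun _ _ hij => adjoin.mono _ _ _ (Set.image_mono fun _ hj => lt_of_lt_of_le hj hij)

theorem mem_firstAdjoin_succ (i : Fin n) : x i ∈ firstAdjoin K x (i + 1) :=
  subset_adjoin _ _ ⟨i, Nat.lt_succ_self _, rfl⟩

theorem firstAdjoin_succ (i : Fin n) :
    firstAdjoin K x (i + 1) = (firstAdjoin K x i)⟮x i⟯.restrictScalars K := by
  rw [firstAdjoin, firstAdjoin, adjoin_adjoin_left]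
  congr 1
  ext y
  simp [le_iff_lt_or_eq, or_and_right, exists_or, or_comm, eq_comm, Fin.val_inj]

theorem firstAdjoin_eq_adjoin_range : firstAdjoin K x n = adjoin K (Set.range x) := by
  simp [firstAdjoin]

end firstAdjoin

theorem pickert_monomials_basis_general
    (K L : Type*) [Field K] [Field L] [Algebra K L] [FiniteDimensional K L]
    (p : ℕ) (hp : p.Prime) [CharP K p]
    (hins : ∀ y : L, ∃ m : ℕ, y ^ p ^ m ∈ (algebraMap K L).range)
    (n : ℕ) (x : Fin n → L) (hx : IsPickertSeq p K x) :
    (∃ b : Module.Basis (∀ i : Fin n, Fin (p ^ pickertExp p K x i)) K L,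
      ∀ r, b r = ∏ i : Fin n, x i ^ ((r i : ℕ))) ∧
    Module.finrank K L = p ^ (∑ i : Fin n, pickertExp p K x i) := by
  have : ExpChar K p := ExpChar.prime hp
  have : IsPurelyInseparable K L := (isPurelyInseparable_iff_pow_mem K p).mpr hins
  have hdeg (i : Fin n) :
      (minpoly (firstAdjoin K x i) (x i)).natDegree = p ^ pickertExp p K x i :=
    natDegree_minpoly_eq_pow_pExp p _ _
  have hind (i : Fin n) : LinearIndependent (firstAdjoin K x i)
      fun j : Fin (p ^ pickertExp p K x i) => x i ^ (j : ℕ) :=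
    hdeg i ▸ linearIndependent_pow (x i)
  have hspan (i : Fin n) : (firstAdjoin K x (i + 1) : Set L) ⊆
      Submodule.span (firstAdjoin K x i)
        (Set.range fun j : Fin (p ^ pickertExp p K x i) => x i ^ (j : ℕ)) := by
    rw [firstAdjoin_succ, coe_restrictScalars, ← hdeg]
    exact adjoin_simple_subset_span_pow (IsPurelyInseparable.isIntegral' _ _)
  have htop : firstAdjoin K x n = ⊤ := by
    have : ExpChar L p := expChar_of_injective_algebraMap (algebraMap K L).injective p
    rw [firstAdjoin_eq_adjoin_range]
    exact adjoin_eq_top_of_adjoin_pow_union_eq_top p hx.1.1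
      (IsPurelyInseparable.exponent_def' K p)
  have hli :=
    linearIndependent_prod_pow_of_chain (firstAdjoin_mono x) x _ (mem_firstAdjoin_succ x) hind
  have hsp : ⊤ ≤ Submodule.span K (Set.range fun r : (∀ i, Fin (p ^ pickertExp p K x i)) =>
      ∏ i, x i ^ (r i : ℕ)) :=
    fun y _ => subset_span_prod_pow_of_chain (firstAdjoin_zero x) x _ hspan (htop ▸ mem_top)
  refine ⟨⟨.mk hli hsp, Module.Basis.mk_apply hli hsp⟩, ?_⟩
  rw [Module.finrank_eq_card_basis (.mk hli hsp), Fintype.card_pi]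
  simp [Finset.prod_pow_eq_pow_sum]

/-- If `x₀, …, x_{n-1}` is a Pickert generating sequence for a finite
purely inseparable extension `L/K` with exponent sequence `e₀ ≥ ⋯ ≥ e_{n-1}`, then the
monomials `x₀^{r₀} ⋯ x_{n-1}^{r_{n-1}}` with `0 ≤ rᵢ < p^{eᵢ}` form a `K`-basis of
`L`; in particular `[L : K] = p^{e₀ + ⋯ + e_{n-1}}`. -/
theorem pickert_monomials_basis
    (K L : Type*) [Field K] [Field L] [Algebra K L] [FiniteDimensional K L]
    (p : ℕ) (hp : p.Prime) [CharP K p]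
    (hins : ∀ y : L, ∃ m : ℕ, y ^ p ^ m ∈ (algebraMap K L).range)
    (n : ℕ) (x : Fin n → L) (hx : IsPickertSeq p K x)
    (hdec : ∀ i j : Fin n, i ≤ j → pickertExp p K x j ≤ pickertExp p K x i) :
    (∃ b : Module.Basis (∀ i : Fin n, Fin (p ^ pickertExp p K x i)) K L,
      ∀ r, b r = ∏ i : Fin n, x i ^ ((r i : ℕ))) ∧
    Module.finrank K L = p ^ (∑ i : Fin n, pickertExp p K x i) :=
  pickert_monomials_basis_general K L p hp hins n x hx
end

section
/- Let K be a field of characteristic p > 0 and K(x)/K a simple finite purely inseparable extension with exp[x : K] = l, so that {x^j : 0 ≤ j < p^l} is a K-basis of K(x). For 0 ≤ m < p^l let (d/dx)^{[m]} be the K-linear endomorphism of K(x) with (d/dx)^{[m]}(x^j) = C(j, m)·x^{j−m} (binomial coefficient mod p, with the convention x^{j−m} = 0 if j < m). Then each (d/dx)^{[m]} is a differential operator of order m, and Diff_K K(x) = End_K K(x) is generated as a K(x)-algebra by the operators (d/dx)^{[p^k]} for 0 ≤ k < l. -/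
/-- `D` is a differential operator of order ≤ n over K: all iterated commutators
`[[⋯[D, a₀], a₁]⋯, aₙ]` with `n + 1` multiplication operators vanish. -/
def IsDiffOpLE (K M : Type*) [CommSemiring K] [CommRing M] [Algebra K M]
    (n : ℕ) (D : M →ₗ[K] M) : Prop :=
  ∀ a : Fin (n + 1) → M,
    (List.ofFn a).foldl
      (fun E c => E ∘ₗ LinearMap.mulLeft K c - LinearMap.mulLeft K c ∘ₗ E) D = 0

/-- The divided-power derivative `(d/dx)^{[m]}`, sending the basis vector `x ^ j` to
`C(j, m) • x ^ (j - m)` (which is `0` when `j < m`, as then `C(j, m) = 0`). -/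
noncomputable def dividedDeriv {K L : Type*} [Field K] [Field L] [Algebra K L]
    {N : ℕ} (b : Module.Basis (Fin N) K L) (x : L) (m : ℕ) : L →ₗ[K] L :=
  b.constr K fun j => (Nat.choose (j : ℕ) m : L) * x ^ ((j : ℕ) - m)


/-!
Write `[·, a]` for the operator `E ↦ E ∘ a - a ∘ E` on `End_K K(x)`. Since `K(x) = K[x]` and
`[·, yz] = (· ∘ z) [·, y] + (y ∘ ·) [·, z]`, every `[·, a]` is `Q ∘ [·, x]` with `Q` commuting
with `[·, x]`; so `D` has order `≤ n` as soon as `[·, x]^(n+1) D = 0`. In characteristic `p`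
the commuting operators `E ↦ E ∘ x` and `E ↦ x ∘ E` give `[·, x]^(p^l) = [·, x^(p^l)] = 0`,
so every endomorphism is a differential operator. Pascal's rule gives
`[(d/dx)^[m+1], x] = (d/dx)^[m]`, which pins down the order of `(d/dx)^[m]`.

The `(d/dx)^[m]`, `m < p^l`, are triangular on the basis `x^j`, hence `K(x)`-linearly independent,
hence a `K(x)`-basis of `End_K K(x)` by dimension count. Finally
`(d/dx)^[p^k] (d/dx)^[m-p^k] = C(m, p^k) (d/dx)^[m]`, and for `p^k ≤ m < p^(k+1)` Lucas' theorem
gives `C(m, p^k) ≡ ⌊m / p^k⌋ ≢ 0 (mod p)`.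
-/

open LinearMap

theorem Nat.choose_prime_pow_modEq_div {p : ℕ} [Fact p.Prime] (m k : ℕ) :
    m.choose (p ^ k) ≡ m / p ^ k [MOD p] := by
  induction k generalizing m with
  | zero => simp [Nat.ModEq.refl]
  | succ k ih =>
    have hp := (Fact.out : p.Prime).pos
    refine (Choose.choose_modEq_choose_mod_mul_choose_div_nat).trans ?_
    rw [pow_succ', Nat.mul_mod_right, Nat.choose_zero_right, one_mul,
      Nat.mul_div_cancel_left _ hp, ← Nat.div_div_eq_div_mul]
    exact ih (m / p)

theorem Nat.cast_choose_succ_succ_mul_pow {R : Type*} [CommRing R] (x : R) (j m : ℕ) :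
    ((j + 1).choose (m + 1) : R) * x ^ (j + 1 - (m + 1)) =
      j.choose m * x ^ (j - m) + x * (j.choose (m + 1) * x ^ (j - (m + 1))) := by
  rw [Nat.choose_succ_succ, Nat.cast_add, add_mul, Nat.add_sub_add_right]
  rcases le_or_gt j m with hjm | hmj
  · rw [Nat.choose_eq_zero_of_lt (Nat.lt_succ_of_le hjm)]
    simp
  · obtain ⟨d, rfl⟩ := Nat.exists_eq_add_of_lt hmj
    rw [show m + d + 1 - m = d + 1 by omega, show m + d + 1 - (m + 1) = d by omega]
    ring

theorem Nat.cast_choose_prime_pow_ne_zero (R : Type*) [AddMonoidWithOne R] {p : ℕ} [Fact p.Prime]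
    [CharP R p] {m k : ℕ} (hkm : p ^ k ≤ m) (hmk : m < p ^ (k + 1)) :
    (m.choose (p ^ k) : R) ≠ 0 := by
  have hp := (Fact.out : p.Prime).pos
  rw [CharP.natCast_eq_natCast' R p (Nat.choose_prime_pow_modEq_div m k), Ne,
    CharP.cast_eq_zero_iff R p]
  have h1 : 0 < m / p ^ k := Nat.div_pos hkm (pow_pos hp k)
  have h2 : m / p ^ k < p := Nat.div_lt_of_lt_mul (by rwa [← pow_succ])
  exact fun h => (Nat.le_of_dvd h1 h).not_gt h2

section Commutator

variable (K : Type*) {M : Type*} [CommSemiring K] [CommRing M] [Algebra K M]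

def commutatorMul (a : M) : Module.End K (Module.End K M) :=
  mulRight K (mulLeft K a) - mulLeft K (mulLeft K a)

variable {K}

theorem commutatorMul_apply (a : M) (E : Module.End K M) :
    commutatorMul K a E = E ∘ₗ mulLeft K a - mulLeft K a ∘ₗ E :=
  rfl

theorem isDiffOpLE_iff (n : ℕ) (D : Module.End K M) :
    IsDiffOpLE K M n D ↔
      ∀ a : Fin (n + 1) → M, (List.ofFn a).foldl (fun E c => commutatorMul K c E) D = 0 :=
  Iff.rfl

theorem commutatorMul_apply_one (a : M) : commutatorMul K a 1 = 0 := by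
  simp [commutatorMul_apply, Module.End.one_eq_id]

theorem commutatorMul_algebraMap (c : K) : commutatorMul K (algebraMap K M c) = 0 := by
  ext E y
  simp [commutatorMul_apply, ← Algebra.smul_def]

theorem commutatorMul_add (a b : M) :
    commutatorMul K (a + b) = commutatorMul K a + commutatorMul K b := by
  ext E y
  simp [commutatorMul_apply, add_mul]
  ring

theorem commutatorMul_mul (a b : M) :
    commutatorMul K (a * b) =
      mulRight K (mulLeft K b) * commutatorMul K a +
        mulLeft K (mulLeft K a) * commutatorMul K b := by
  ext E y
  simp [commutatorMul_apply]
  ring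

theorem commute_mulRight_commutatorMul (a b : M) :
    Commute (mulRight K (mulLeft K a)) (commutatorMul K b) := by
  ext E y
  simp [commutatorMul_apply, mul_left_comm a b]

theorem commute_mulLeft_commutatorMul (a b : M) :
    Commute (mulLeft K (mulLeft K a)) (commutatorMul K b) := by
  ext E y
  simp [commutatorMul_apply]
  ring

theorem exists_commutatorMul_eq_mul {x : M} (hx : Algebra.adjoin K {x} = ⊤) (a : M) :
    ∃ Q, Commute Q (commutatorMul K x) ∧ commutatorMul K a = Q * commutatorMul K x := by
  have ha : a ∈ Algebra.adjoin K {x} := hx ▸ Algebra.mem_top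
  induction ha using Algebra.adjoin_induction with
  | mem y hy =>
    rw [Set.mem_singleton_iff.1 hy]
    exact ⟨1, Commute.one_left _, (one_mul _).symm⟩
  | algebraMap c => exact ⟨0, Commute.zero_left _, by rw [commutatorMul_algebraMap, zero_mul]⟩
  | add y z _ _ hy hz =>
    obtain ⟨Q, hQ, hy⟩ := hy
    obtain ⟨R, hR, hz⟩ := hz
    exact ⟨Q + R, hQ.add_left hR, by rw [commutatorMul_add, hy, hz, add_mul]⟩
  | mul y z _ _ hy hz =>
    obtain ⟨Q, hQ, hy⟩ := hy
    obtain ⟨R, hR, hz⟩ := hz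
    refine ⟨mulRight K (mulLeft K z) * Q + mulLeft K (mulLeft K y) * R,
      ((commute_mulRight_commutatorMul z x).mul_left hQ).add_left
        ((commute_mulLeft_commutatorMul y x).mul_left hR), ?_⟩
    rw [commutatorMul_mul, hy, hz, add_mul, mul_assoc, mul_assoc]

theorem foldl_commutatorMul_eq_zero {x : M} (hx : Algebra.adjoin K {x} = ⊤) (l : List M)
    {D : Module.End K M} (hD : (commutatorMul K x ^ l.length) D = 0) :
    l.foldl (fun E c => commutatorMul K c E) D = 0 := by
  induction l generalizing D with
  | nil => exact hD
  | cons a l ih =>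
    apply ih
    obtain ⟨Q, hQ, ha⟩ := exists_commutatorMul_eq_mul hx a
    rw [← Module.End.mul_apply, ha, ← mul_assoc, (hQ.pow_right _).symm.eq, mul_assoc,
      ← pow_succ, Module.End.mul_apply, ← List.length_cons, hD, map_zero]

theorem isDiffOpLE_of_commutatorMul_pow_eq_zero {x : M} (hx : Algebra.adjoin K {x} = ⊤)
    {n : ℕ} {D : Module.End K M} (hD : (commutatorMul K x ^ (n + 1)) D = 0) :
    IsDiffOpLE K M n D :=
  fun a => foldl_commutatorMul_eq_zero hx _ (by rwa [List.length_ofFn])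

theorem foldl_replicate_commutatorMul (n : ℕ) (a : M) (D : Module.End K M) :
    (List.replicate n a).foldl (fun E c => commutatorMul K c E) D = (commutatorMul K a ^ n) D := by
  induction n generalizing D with
  | zero => rfl
  | succ n ih => rw [List.replicate_succ, List.foldl_cons, ih, pow_succ, Module.End.mul_apply]

end Commutator

section CharP

variable {K M : Type*} [Field K] [CommRing M] [Nontrivial M] [Algebra K M] {p : ℕ}
  [Fact p.Prime] [CharP K p] {x : M} {l : ℕ} (hl : x ^ p ^ l ∈ (algebraMap K M).range)
include hl

theorem commutatorMul_pow_eq_zero : commutatorMul K x ^ p ^ l = 0 := by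
  have : CharP (Module.End K (Module.End K M)) p := charP_of_injective_algebraMap' K p
  obtain ⟨c, hc⟩ := hl
  rw [commutatorMul, sub_pow_char_pow_of_commute (R := Module.End K (Module.End K M)) p l
      (commute_mulLeft_right _ _).symm]
  simp only [pow_mulRight, pow_mulLeft, ← hc]
  exact commutatorMul_algebraMap (M := M) c

theorem isDiffOpLE_of_pow_mem_range (hx : Algebra.adjoin K {x} = ⊤) (D : Module.End K M) :
    IsDiffOpLE K M (p ^ l - 1) D :=
  isDiffOpLE_of_commutatorMul_pow_eq_zero hx (by
    rw [Nat.sub_add_cancel (Nat.one_le_pow _ _ (Fact.out : p.Prime).pos),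
      commutatorMul_pow_eq_zero hl, LinearMap.zero_apply])

end CharP

section DividedDeriv

variable {K L : Type*} [Field K] [Field L] [Algebra K L] {N : ℕ}
  (b : Module.Basis (Fin N) K L) {x : L}

theorem dividedDeriv_basis (m : ℕ) (j : Fin N) :
    dividedDeriv b x m (b j) = ((j : ℕ).choose m : L) * x ^ ((j : ℕ) - m) :=
  b.constr_basis K _ j

variable {b} (hb : ∀ j : Fin N, b j = x ^ (j : ℕ))
include hb

theorem adjoin_singleton_eq_top_of_basis_pow : Algebra.adjoin K {x} = ⊤ :=
  eq_top_iff.2 fun y _ => by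
    rw [← b.sum_repr y]
    exact Subalgebra.sum_mem _ fun j _ => Subalgebra.smul_mem _
      (hb j ▸ pow_mem (Algebra.self_mem_adjoin_singleton K x) _) _

theorem dividedDeriv_pow (m : ℕ) {j : ℕ} (hj : j < N) :
    dividedDeriv b x m (x ^ j) = (j.choose m : L) * x ^ (j - m) := by
  rw [← hb ⟨j, hj⟩, dividedDeriv_basis]

theorem dividedDeriv_pow_self {m : ℕ} (hm : m < N) : dividedDeriv b x m (x ^ m) = 1 := by
  simp [dividedDeriv_pow hb m hm]

theorem dividedDeriv_pow_of_lt {m j : ℕ} (hj : j < N) (hjm : j < m) :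
    dividedDeriv b x m (x ^ j) = 0 := by
  simp [dividedDeriv_pow hb m hj, Nat.choose_eq_zero_of_lt hjm]

theorem dividedDeriv_zero : dividedDeriv b x 0 = 1 :=
  b.ext fun j => by simp [hb, dividedDeriv_pow hb 0 j.isLt]

theorem dividedDeriv_ne_zero {m : ℕ} (hm : m < N) : dividedDeriv b x m ≠ 0 := fun h => by
  simpa [h] using dividedDeriv_pow_self hb hm

theorem dividedDeriv_mul_dividedDeriv (a c : ℕ) :
    dividedDeriv b x a * dividedDeriv b x c = (a + c).choose c • dividedDeriv b x (a + c) := by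
  refine b.ext fun j => ?_
  have hjc : (j : ℕ) - c < N := (Nat.sub_le _ _).trans_lt j.isLt
  rw [Module.End.mul_apply, dividedDeriv_basis, LinearMap.smul_apply, dividedDeriv_basis,
    ← nsmul_eq_mul, map_nsmul, dividedDeriv_pow hb a hjc, nsmul_eq_mul, nsmul_eq_mul,
    ← mul_assoc, ← mul_assoc, ← Nat.cast_mul, ← Nat.cast_mul, Nat.sub_sub, add_comm c a,
    mul_comm ((a + c).choose c), Nat.choose_mul (Nat.le_add_left c a), Nat.add_sub_cancel]

theorem linearIndependent_dividedDeriv :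
    LinearIndependent L fun m : Fin N => dividedDeriv b x m := by
  refine Fintype.linearIndependent_iff.2 fun g hg => ?_
  have hg_pow (j : Fin N) : ∑ m : Fin N, g m * dividedDeriv b x m (x ^ (j : ℕ)) = 0 := by
    simpa using congr($hg (x ^ (j : ℕ)))
  intro j
  induction j using WellFoundedLT.induction with
  | _ j ih =>
    have hj := hg_pow j
    rw [Finset.sum_eq_single j ?_ (by simp), dividedDeriv_pow_self hb j.isLt, mul_one] at hj
    · exact hj
    intro m _ hmj
    rcases lt_or_gt_of_ne hmj with h | h
    · rw [ih m h, zero_mul]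
    · rw [dividedDeriv_pow_of_lt hb j.isLt (Fin.lt_def.1 h), mul_zero]

theorem span_dividedDeriv_eq_top :
    Submodule.span L (Set.range fun m : Fin N => dividedDeriv b x m) = ⊤ :=
  have : FiniteDimensional K L := b.finiteDimensional_of_finite
  (linearIndependent_dividedDeriv hb).span_eq_top_of_card_eq_finrank' (by
    rw [Module.finrank_linearMap_self, Module.finrank_eq_card_basis b])

end DividedDeriv

section PurelyInseparable

variable {K L : Type*} [Field K] [Field L] [Algebra K L] {p l : ℕ} [Fact p.Prime] [CharP K p]
  {b : Module.Basis (Fin (p ^ l)) K L} {x : L} (hb : ∀ j : Fin (p ^ l), b j = x ^ (j : ℕ))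
include hb

theorem dividedDeriv_mem_adjoin {m : ℕ} (hm : m < p ^ l) :
    dividedDeriv b x m ∈
      Algebra.adjoin K (Set.range fun k : Fin l => dividedDeriv b x (p ^ (k : ℕ))) := by
  induction m using Nat.strong_induction_on with
  | _ m ih =>
    rcases Nat.eq_zero_or_pos m with rfl | hm0
    · exact dividedDeriv_zero hb ▸ one_mem _
    have hp := (Fact.out : p.Prime).one_lt
    set k := Nat.log p m
    have hkm : p ^ k ≤ m := Nat.pow_log_le_self p hm0.ne'
    have hmk : m < p ^ (k + 1) := Nat.lt_pow_succ_log_self hp m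
    have hkl : k < l := (Nat.pow_lt_pow_iff_right hp).1 (hkm.trans_lt hm)
    have hpk : 0 < p ^ k := Nat.pow_pos (by omega)
    have hmul := dividedDeriv_mul_dividedDeriv hb (p ^ k) (m - p ^ k)
    rw [Nat.add_sub_cancel' hkm, Nat.choose_symm hkm, ← Nat.cast_smul_eq_nsmul K,
      ← inv_smul_eq_iff₀ (Nat.cast_choose_prime_pow_ne_zero K hkm hmk)] at hmul
    rw [← hmul]
    have hgen : dividedDeriv b x (p ^ k) ∈
        Algebra.adjoin K (Set.range fun k : Fin l => dividedDeriv b x (p ^ (k : ℕ))) :=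
      Algebra.subset_adjoin (Set.mem_range_self (⟨k, hkl⟩ : Fin l))
    exact Subalgebra.smul_mem _ (mul_mem hgen (ih _ (by omega) (by omega))) _

theorem adjoin_mulLeft_union_dividedDeriv_eq_top :
    Algebra.adjoin K ((Set.range fun a : L => (mulLeft K a : Module.End K L)) ∪
      Set.range fun k : Fin l => dividedDeriv b x (p ^ (k : ℕ))) = ⊤ := by
  refine eq_top_iff.2 fun E _ => ?_
  obtain ⟨g, rfl⟩ := (Submodule.mem_span_range_iff_exists_fun L).1
    ((span_dividedDeriv_eq_top hb).symm ▸ Submodule.mem_top : E ∈ _)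
  refine Subalgebra.sum_mem _ fun m _ => ?_
  rw [show g m • dividedDeriv b x m = mulLeft K (g m) * dividedDeriv b x m from rfl]
  exact mul_mem (Algebra.subset_adjoin (Or.inl ⟨g m, rfl⟩))
    (Algebra.adjoin_mono Set.subset_union_right (dividedDeriv_mem_adjoin hb m.isLt))

variable (hl : x ^ p ^ l ∈ (algebraMap K L).range)
include hl

theorem dividedDeriv_pow_of_le {m j : ℕ} (hm0 : m ≠ 0) (hm : m < p ^ l) (hj : j ≤ p ^ l) :
    dividedDeriv b x m (x ^ j) = (j.choose m : L) * x ^ (j - m) := by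
  rcases hj.lt_or_eq with hj | rfl
  · exact dividedDeriv_pow hb m hj
  have : CharP L p := charP_of_injective_algebraMap (algebraMap K L).injective p
  obtain ⟨c, hc⟩ := hl
  rw [← hc, Algebra.algebraMap_eq_smul_one, map_smul, ← pow_zero x,
    dividedDeriv_pow_of_lt hb (pow_pos (Fact.out : p.Prime).pos l) (Nat.pos_of_ne_zero hm0),
    smul_zero, (CharP.cast_eq_zero_iff L p _).2 ((Fact.out : p.Prime).dvd_choose_pow hm0 hm.ne),
    zero_mul]

theorem commutatorMul_dividedDeriv_succ {m : ℕ} (hm : m + 1 < p ^ l) :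
    commutatorMul K x (dividedDeriv b x (m + 1)) = dividedDeriv b x m :=
  b.ext fun j => by
    rw [commutatorMul_apply, LinearMap.sub_apply, comp_apply, comp_apply, mulLeft_apply,
      mulLeft_apply, hb, ← pow_succ', dividedDeriv_pow_of_le hb hl m.succ_ne_zero hm j.isLt,
      dividedDeriv_pow hb _ j.isLt, dividedDeriv_pow hb _ j.isLt,
      Nat.cast_choose_succ_succ_mul_pow, add_sub_cancel_right]

theorem commutatorMul_pow_dividedDeriv {k m : ℕ} (hkm : k ≤ m) (hm : m < p ^ l) :
    (commutatorMul K x ^ k) (dividedDeriv b x m) = dividedDeriv b x (m - k) := by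
  induction k with
  | zero => rfl
  | succ k ih =>
    rw [pow_succ', Module.End.mul_apply, ih (by omega), show m - k = m - (k + 1) + 1 by omega,
      commutatorMul_dividedDeriv_succ hb hl (by omega)]

theorem isDiffOpLE_dividedDeriv {m : ℕ} (hm : m < p ^ l) :
    IsDiffOpLE K L m (dividedDeriv b x m) :=
  isDiffOpLE_of_commutatorMul_pow_eq_zero (adjoin_singleton_eq_top_of_basis_pow hb) (by
    rw [pow_succ', Module.End.mul_apply, commutatorMul_pow_dividedDeriv hb hl le_rfl hm,
      Nat.sub_self, dividedDeriv_zero hb, commutatorMul_apply_one])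

theorem le_of_isDiffOpLE_dividedDeriv {m n : ℕ} (hm : m < p ^ l)
    (h : IsDiffOpLE K L n (dividedDeriv b x m)) : m ≤ n := by
  by_contra! hnm
  have h := (isDiffOpLE_iff _ _).1 h fun _ => x
  rw [List.ofFn_const, foldl_replicate_commutatorMul,
    commutatorMul_pow_dividedDeriv hb hl hnm hm] at h
  exact dividedDeriv_ne_zero hb (by omega) h

end PurelyInseparable

theorem simple_purelyInseparable_diffOps_general
    (K L : Type*) [Field K] [Field L] [Algebra K L]
    (p : ℕ) (hp : p.Prime) [CharP K p]
    (x : L)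
    (l : ℕ) (hl : x ^ p ^ l ∈ (algebraMap K L).range)
    (b : Module.Basis (Fin (p ^ l)) K L) (hb : ∀ j : Fin (p ^ l), b j = x ^ (j : ℕ)) :
    (∀ m : ℕ, m < p ^ l →
      IsDiffOpLE K L m (dividedDeriv b x m) ∧
        ∀ m' : ℕ, IsDiffOpLE K L m' (dividedDeriv b x m) → m ≤ m') ∧
    (∀ D : L →ₗ[K] L, ∃ m : ℕ, IsDiffOpLE K L m D) ∧
    Algebra.adjoin K
        ((Set.range fun a : L => (LinearMap.mulLeft K a : Module.End K L)) ∪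
          (Set.range fun k : Fin l => (dividedDeriv b x (p ^ (k : ℕ)) : Module.End K L))) =
      (⊤ : Subalgebra K (Module.End K L)) := by
  have : Fact p.Prime := ⟨hp⟩
  exact ⟨fun m hm => ⟨isDiffOpLE_dividedDeriv hb hl hm,
      fun _ => le_of_isDiffOpLE_dividedDeriv hb hl hm⟩,
    fun D => ⟨p ^ l - 1,
      isDiffOpLE_of_pow_mem_range hl (adjoin_singleton_eq_top_of_basis_pow hb) D⟩,
    adjoin_mulLeft_union_dividedDeriv_eq_top hb⟩

/-- For a simple finite purely inseparable extension `K(x)/K` of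
exponent `l` in characteristic `p > 0`, with `K`-basis `{x^j : 0 ≤ j < p^l}`, each
divided-power derivative `(d/dx)^{[m]}` (`m < p^l`) is a differential operator of order
exactly `m`, every `K`-endomorphism is a differential operator, and
`Diff_K K(x) = End_K K(x)` is generated as a `K(x)`-algebra by the `(d/dx)^{[p^k]}`
for `0 ≤ k < l`. -/
theorem simple_purelyInseparable_diffOps
    (K L : Type*) [Field K] [Field L] [Algebra K L] [FiniteDimensional K L]
    (p : ℕ) (hp : p.Prime) [CharP K p]
    (x : L) (hgen : IntermediateField.adjoin K {x} = ⊤)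
    (l : ℕ) (hl : x ^ p ^ l ∈ (algebraMap K L).range)
    (hlmin : ∀ m : ℕ, m < l → x ^ p ^ m ∉ (algebraMap K L).range)
    (b : Module.Basis (Fin (p ^ l)) K L) (hb : ∀ j : Fin (p ^ l), b j = x ^ (j : ℕ)) :
    (∀ m : ℕ, m < p ^ l →
      IsDiffOpLE K L m (dividedDeriv b x m) ∧
        ∀ m' : ℕ, IsDiffOpLE K L m' (dividedDeriv b x m) → m ≤ m') ∧
    (∀ D : L →ₗ[K] L, ∃ m : ℕ, IsDiffOpLE K L m D) ∧
    Algebra.adjoin K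
        ((Set.range fun a : L => (LinearMap.mulLeft K a : Module.End K L)) ∪
          (Set.range fun k : Fin l => (dividedDeriv b x (p ^ (k : ℕ)) : Module.End K L))) =
      (⊤ : Subalgebra K (Module.End K L)) :=
  simple_purelyInseparable_diffOps_general K L p hp x l hl b hb
end

section
/- Let K be a field of characteristic p > 0 and L/K a finite purely inseparable field extension with Pickert generating sequence x_1, …, x_n and exponent sequence e_1 ≥ ⋯ ≥ e_n. Suppose i is an index with exp[x_i : K(x_1,…,x_{i−1})] ≠ exp[x_i : K], set q = p^{e_i}, and let f ∈ K[X_1,…,X_{i−1}] with x_i^q = f(x_1^q, …, x_{i−1}^q) be a structure equation for x_i (which exists by Pickert's theorem). If some coefficient of f does not lie in L^q, then at least two coefficients of (monomials of) f do not lie in L^q. -/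
variable {K L : Type*} [Field K] [Field L] [Algebra K L]

universe u

open IntermediateField Polynomial

/-- If `L = F(S)` with `t ^ p ∈ F` for every `t ∈ S`, then `[L : F] ≤ p ^ |S|`. -/
lemma aux_finrank_le {L : Type u} [Field L] (p : ℕ) (hp : 0 < p) :
    ∀ (k : ℕ) (F : Type u) [Field F] [Algebra F L] (S : Finset L),
      S.card = k → (∀ t ∈ S, ∃ c : F, algebraMap F L c = t ^ p) →
      IntermediateField.adjoin F (S : Set L) = ⊤ → Module.finrank F L ≤ p ^ k := by
  classical
  intro k
  induction k with
  | zero =>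
    intro F _ _ S hcard hS htop
    rw [Finset.card_eq_zero] at hcard
    subst hcard
    rw [Finset.coe_empty, IntermediateField.adjoin_empty] at htop
    rw [← IntermediateField.finrank_top' (F := F) (E := L), ← htop, IntermediateField.finrank_bot]
    simp
  | succ k ih =>
    intro F _ _ S hcard hS htop
    obtain ⟨t, T, htT, rfl, hTcard⟩ := Finset.card_eq_succ.mp hcard
    obtain ⟨c, hc⟩ := hS t (Finset.mem_insert_self t T)
    have hti : IsIntegral F t := by
      refine ⟨X ^ p - C c, monic_X_pow_sub_C c hp.ne', ?_⟩
      rw [← Polynomial.aeval_def, map_sub, map_pow, aeval_X, aeval_C, hc, sub_self]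
    have h1 : Module.finrank F F⟮t⟯ ≤ p := by
      rw [adjoin.finrank hti]
      have hne : (X ^ p - C c : Polynomial F) ≠ 0 :=
        (monic_X_pow_sub_C c hp.ne').ne_zero
      have hdvd : minpoly F t ∣ X ^ p - C c := by
        apply minpoly.dvd
        rw [map_sub, map_pow, aeval_X, aeval_C, hc, sub_self]
      calc (minpoly F t).natDegree ≤ (X ^ p - C c : Polynomial F).natDegree :=
            Polynomial.natDegree_le_of_dvd hdvd hne
        _ = p := by rw [natDegree_X_pow_sub_C]
    have htop' : IntermediateField.adjoin F⟮t⟯ (T : Set L) = ⊤ := by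
      apply IntermediateField.restrictScalars_injective F
      rw [IntermediateField.adjoin_adjoin_left, IntermediateField.restrictScalars_top,
        ← htop, Finset.coe_insert, Set.insert_eq]
    have hS' : ∀ t' ∈ T, ∃ c' : F⟮t⟯, algebraMap F⟮t⟯ L c' = t' ^ p := by
      intro t' ht'
      obtain ⟨c', hc'⟩ := hS t' (Finset.mem_insert_of_mem ht')
      exact ⟨⟨algebraMap F L c', IntermediateField.algebraMap_mem _ c'⟩, hc'⟩
    have ihT := ih F⟮t⟯ T hTcard hS' htop'
    calc Module.finrank F L = Module.finrank F F⟮t⟯ * Module.finrank F⟮t⟯ L :=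
          (Module.finrank_mul_finrank F F⟮t⟯ L).symm
      _ ≤ p * p ^ k := Nat.mul_le_mul h1 ihT
      _ = p ^ (k + 1) := by ring

/-- An element of a p-basis is nonzero. -/
lemma aux_pbasis_ne_zero {K : Type*} {L : Type*} [Field K] [Field L] [Algebra K L]
    (p : ℕ) (hp : p.Prime) {n : ℕ} {x : Fin n → L} (h : IsPBasis p K x) (j : Fin n) :
    x j ≠ 0 := by
  classical
  intro h0
  set A : Set L := Set.range fun y : L => y ^ p with hA
  set E := IntermediateField.adjoin K A with hE
  set S : Finset L := Finset.image x (Finset.univ.erase j) with hSdef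
  have htop : IntermediateField.adjoin ↥E (S : Set L) = ⊤ := by
    have h1 : IntermediateField.adjoin ↥E (A ∪ Set.range x) = ⊤ :=
      IntermediateField.adjoin_eq_top_of_adjoin_eq_top K h.1
    rw [eq_top_iff, ← h1, IntermediateField.adjoin_le_iff]
    rintro z (hz | ⟨k, rfl⟩)
    · exact IntermediateField.algebraMap_mem _
        (⟨z, IntermediateField.subset_adjoin K A hz⟩ : E)
    · by_cases hk : k = j
      · rw [hk, h0]; exact zero_mem _
      · exact IntermediateField.subset_adjoin _ _ (by
          simp only [hSdef, Finset.coe_image, Set.mem_image, Finset.mem_coe,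
            Finset.mem_erase]
          exact ⟨k, by simp [hk], rfl⟩)
  have hS : ∀ t ∈ S, ∃ c : ↥E, algebraMap ↥E L c = t ^ p :=
    fun t _ => ⟨⟨t ^ p, IntermediateField.subset_adjoin K A ⟨t, rfl⟩⟩, rfl⟩
  have hle := aux_finrank_le p hp.pos S.card ↥E S rfl hS htop
  have hcard : S.card ≤ n - 1 := by
    calc S.card ≤ (Finset.univ.erase j).card := Finset.card_image_le
      _ = n - 1 := by simp
  have hn : 0 < n := j.pos
  have hfr : Module.finrank ↥E L = p ^ n := h.2
  rw [hfr] at hle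
  have hlt : p ^ S.card < p ^ n :=
    lt_of_le_of_lt (Nat.pow_le_pow_right hp.pos hcard)
      (Nat.pow_lt_pow_right hp.one_lt (by omega))
  omega

/-- Let `x₀, …, x_{n-1}` be a Pickert generating sequence for a
finite purely inseparable extension `L/K` with exponent sequence `e₀ ≥ ⋯ ≥ e_{n-1}`,
let `i` be an index where `exp[xᵢ : K(x₀,…,x_{i-1})] ≠ exp[xᵢ : K]`, set
`q = p^{eᵢ}`, and let `f` be a structure equation, `xᵢ^q = f(x₀^q, …, x_{i-1}^q)`.
If some coefficient of `f` does not lie in `L^q`, then at least two coefficients of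
monomials of `f` do not lie in `L^q`. -/
theorem structure_equation_two_bad_coefficients
    (K L : Type*) [Field K] [Field L] [Algebra K L] [FiniteDimensional K L]
    (p : ℕ) (hp : p.Prime) [CharP K p]
    (hins : ∀ y : L, ∃ m : ℕ, y ^ p ^ m ∈ (algebraMap K L).range)
    (n : ℕ) (x : Fin n → L) (hx : IsPickertSeq p K x)
    (hdec : ∀ i j : Fin n, i ≤ j → pickertExp p K x j ≤ pickertExp p K x i)
    (i : Fin n)
    (hne : pickertExp p K x i ≠ pExp p (⊥ : IntermediateField K L) (x i))
    (f : MvPolynomial (Fin n) K)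
    (hfsupp : f ∈ MvPolynomial.supported K {j : Fin n | (j : ℕ) < (i : ℕ)})
    (hfeq : x i ^ p ^ pickertExp p K x i =
      MvPolynomial.aeval (fun j : Fin n => x j ^ p ^ pickertExp p K x i) f)
    (hbad : ∃ m ∈ f.support,
      ¬ ∃ w : L, w ^ p ^ pickertExp p K x i = algebraMap K L (f.coeff m)) :
    ∃ m₁ m₂ : Fin n →₀ ℕ, m₁ ∈ f.support ∧ m₂ ∈ f.support ∧ m₁ ≠ m₂ ∧
      (¬ ∃ w : L, w ^ p ^ pickertExp p K x i = algebraMap K L (f.coeff m₁)) ∧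
      (¬ ∃ w : L, w ^ p ^ pickertExp p K x i = algebraMap K L (f.coeff m₂)) := by
  classical
  by_contra hcon
  push_neg at hcon
  obtain ⟨m₀, hm₀, hbad₀⟩ := hbad
  set e := pickertExp p K x i with he
  set q := p ^ e with hq
  haveI : CharP L p := charP_of_injective_algebraMap (algebraMap K L).injective p
  haveI : Fact p.Prime := ⟨hp⟩
  set φ : L →+* L := iterateFrobenius L p e with hφdef
  have hφ : ∀ z : L, φ z = z ^ q := fun z => by rw [hφdef, iterateFrobenius_def, hq]
  have hgood : ∀ m ∈ f.support.erase m₀,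
      ∃ w : L, w ^ q = algebraMap K L (f.coeff m) := fun m hm =>
    hcon m₀ m hm₀ (Finset.mem_of_mem_erase hm) (Finset.ne_of_mem_erase hm).symm (fun w hw => hbad₀ ⟨w, hw⟩)
  have hgood' : ∀ m : Fin n →₀ ℕ, ∃ w : L,
      m ∈ f.support.erase m₀ → w ^ q = algebraMap K L (f.coeff m) := by
    intro m
    by_cases hm : m ∈ f.support.erase m₀
    · obtain ⟨w, hw⟩ := hgood m hm; exact ⟨w, fun _ => hw⟩
    · exact ⟨0, fun h => absurd h hm⟩
  choose w hw using hgood'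
  set y : L := ∑ m ∈ f.support.erase m₀, w m * ∏ j ∈ m.support, x j ^ m j with hy
  have hyq : y ^ q = ∑ m ∈ f.support.erase m₀,
      algebraMap K L (f.coeff m) * ∏ j ∈ m.support, (x j ^ q) ^ m j := by
    rw [← hφ y, hy, map_sum]
    refine Finset.sum_congr rfl fun m hm => ?_
    rw [map_mul, hφ, hw m hm, map_prod]
    refine congrArg _ (Finset.prod_congr rfl fun j _ => ?_)
    rw [map_pow, hφ]
  have hfe : (MvPolynomial.aeval (fun j : Fin n => x j ^ q) f : L)
      = ∑ m ∈ f.support, algebraMap K L (f.coeff m)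
          * ∏ j ∈ m.support, (x j ^ q) ^ m j := by
    rw [MvPolynomial.aeval_def, MvPolynomial.eval₂_eq]
  have hsplit : x i ^ q = algebraMap K L (f.coeff m₀)
      * ∏ j ∈ m₀.support, (x j ^ q) ^ m₀ j + y ^ q := by
    rw [hfeq, hfe, hyq]
    exact (Finset.add_sum_erase _ _ hm₀).symm
  have hPq : ∏ j ∈ m₀.support, (x j ^ q) ^ m₀ j
      = (∏ j ∈ m₀.support, x j ^ m₀ j) ^ q := by
    rw [← Finset.prod_pow]
    exact Finset.prod_congr rfl fun j _ => by
      rw [← pow_mul, ← pow_mul, mul_comm]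
  have hkey : (x i - y) ^ q = algebraMap K L (f.coeff m₀)
      * (∏ j ∈ m₀.support, x j ^ m₀ j) ^ q := by
    rw [← hφ (x i - y), map_sub, hφ, hφ, hsplit, hPq]
    ring
  by_cases hP : (∏ j ∈ m₀.support, x j ^ m₀ j) = 0
  · obtain ⟨j, hj, hxj⟩ := Finset.prod_eq_zero_iff.mp hP
    exact aux_pbasis_ne_zero p hp hx.1 j
      ((pow_eq_zero_iff (by simpa using hj)).mp hxj)
  · exact hbad₀ ⟨(x i - y) / (∏ j ∈ m₀.support, x j ^ m₀ j), by
      rw [div_pow, hkey, mul_div_assoc, div_self (pow_ne_zero _ hP), mul_one]⟩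
end
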